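/- arXiv:1409.5609 — 2 statements merged into one kernel-verified Lean document; each statement's English description precedes it below -/
import Mathlib

section
/- For every k ≥ 10, the porous exponential domination number of the k-th Apollonian network satisfies γ*_e(G_k) ≤ (3^(k-8) + 5)/2. -/
/-- A family of Apollonian networks, given by a vertex set `Vert` together with a
generation labeling `gen` and an adjacency relation `adj`, satisfying the recursive
construction: the first generation `U₁` consists of three pairwise adjacent vertices
(forming `G₁`); and for each `k ≥ 1`, for each vertex `u` of generation `k` and each
adjacent pair `{x, y}` of neighbors of `u` in `G_k`, exactly one new vertex of
generation `k + 1` is created, adjacent to exactly `u`, `x`, and `y`.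
The `k`-th Apollonian network `G_k` is the induced subgraph on the vertices of
generation at most `k`. -/
structure ApollonianNetwork where
  Vert : Type
  adj : Vert → Vert → Prop
  adj_symm : ∀ a b, adj a b → adj b a
  adj_irrefl : ∀ a, ¬ adj a a
  gen : Vert → ℕ
  gen_pos : ∀ v, 1 ≤ gen v
  /-- The first generation consists of exactly three vertices. -/
  U1_card : ∃ a b c : Vert, a ≠ b ∧ a ≠ c ∧ b ≠ c ∧ {v | gen v = 1} = {a, b, c}
  /-- `G₁` is a complete graph on the first generation. -/
  U1_complete : ∀ a b, gen a = 1 → gen b = 1 → a ≠ b → adj a b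
  /-- All edges join vertices of distinct generations, except within generation 1. -/
  adj_gen : ∀ a b, adj a b → gen a = gen b → gen a = 1
  /-- Every vertex `v` of generation `k ≥ 2` is adjacent, among the vertices of earlier
  generations, to exactly three vertices `u`, `x`, `y`, where `u` has generation `k - 1`
  and `x`, `y` are neighbors of `u` in `G_{k-1}` that are adjacent to each other. -/
  created : ∀ v, 2 ≤ gen v → ∃ u x y,
    gen u = gen v - 1 ∧ gen x ≤ gen v - 1 ∧ gen y ≤ gen v - 1 ∧
    adj u x ∧ adj u y ∧ adj x y ∧
    {w | adj v w ∧ gen w < gen v} = {u, x, y}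
  /-- For each `k ≥ 1`, each vertex `u` of generation `k`, and each adjacent pair
  `{x, y}` of neighbors of `u` in `G_k`, there is exactly one vertex of generation
  `k + 1` whose neighbors in `G_{k+1}` are exactly `u`, `x`, and `y`. -/
  attach : ∀ k, 1 ≤ k → ∀ u x y,
    gen u = k → gen x ≤ k → gen y ≤ k → x ≠ y →
    adj u x → adj u y → adj x y →
    ∃! v, gen v = k + 1 ∧ {w | adj v w ∧ gen w ≤ k} = ({u, x, y} : Set Vert)

/-- The `k`-th Apollonian network `G_k`: the induced subgraph on the vertices of
generation at most `k`. -/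
def ApollonianNetwork.G (A : ApollonianNetwork) (k : ℕ) :
    SimpleGraph {v : A.Vert // A.gen v ≤ k} where
  Adj a b := A.adj a b
  symm := ⟨fun a b h => A.adj_symm a b h⟩
  loopless := ⟨fun a h => A.adj_irrefl a h⟩

open Classical in
/-- The porous exponential domination weight of a set `S` at a vertex `v`:
`∑_{u ∈ S} 1 / 2 ^ (d(u, v) - 1)`, where vertices at infinite distance from `v`
contribute `0`.  (Note `2 * (1/2) ^ d = 1 / 2 ^ (d - 1)` including for `d = 0`.) -/
noncomputable def expWeight {V : Type*} (G : SimpleGraph V) (S : Finset V) (v : V) : ℝ :=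
  ∑ u ∈ S, if G.Reachable u v then 2 * (2 : ℝ)⁻¹ ^ G.dist u v else 0

/-- `S` is a porous exponential dominating set for `G` if every vertex receives
total weight at least 1. -/
def IsPorousExpDomSet {V : Type*} (G : SimpleGraph V) (S : Finset V) : Prop :=
  ∀ v, 1 ≤ expWeight G S v

/-- The porous exponential domination number `γ*ₑ(G)`: the smallest cardinality of a
porous exponential dominating set for `G` (`⊤` if there is none). -/
noncomputable def porousExpDomNum {V : Type*} (G : SimpleGraph V) : ℕ∞ :=
  sInf {n : ℕ∞ | ∃ S : Finset V, IsPorousExpDomSet G S ∧ (S.card : ℕ∞) = n}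

/-!
Take `S` to be the vertices of the first `m = k - 7` generations. Since `|U₁| = 3`, `|U₂| = 1`
and a vertex of generation `j ≥ 2` has at most three children (one for each pair of its three
lower neighbours), `2 |S| ≤ 3 ^ (m - 1) + 5`.

Every vertex of generation at least `4` has a neighbour at least three generations older, so
each vertex of `G_k` is within distance `2` of some `c` of generation at most `m + 1`, and it
suffices that `S` has weight at least `4` at `c`. If `c ∈ S`, then `c` and two older neighbours
contribute `2 + 1 + 1`; if `c` has generation `m + 1`, its three lower neighbours and two further
older vertices at distance `2` contribute `3 · 1 + 2 · 1/2`.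
-/

open Finset

section ExpWeight

variable {V : Type*} (G : SimpleGraph V)

open Classical in
lemma two_mul_inv_two_pow_le_of_edist_le {s v : V} {n : ℕ} (h : G.edist s v ≤ n) :
    2 * (2 : ℝ)⁻¹ ^ n ≤ if G.Reachable s v then 2 * (2 : ℝ)⁻¹ ^ G.dist s v else 0 := by
  have hr : G.Reachable s v :=
    SimpleGraph.edist_ne_top_iff_reachable.1 (ne_top_of_le_ne_top (ENat.natCast_ne_top n) h)
  have hd : G.dist s v ≤ n := by exact_mod_cast hr.coe_dist_eq_edist ▸ h
  rw [if_pos hr]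
  exact mul_le_mul_of_nonneg_left (pow_le_pow_of_le_one (by norm_num) (by norm_num) hd) zero_le_two

lemma card_mul_le_expWeight {t : Finset V} {v : V} {n : ℕ} (h : ∀ s ∈ t, G.edist s v ≤ n) :
    #t * (2 * (2 : ℝ)⁻¹ ^ n) ≤ expWeight G t v := by
  rw [← nsmul_eq_mul, ← sum_const]
  exact sum_le_sum fun s hs => two_mul_inv_two_pow_le_of_edist_le G (h s hs)

lemma expWeight_mono {t S : Finset V} (h : t ⊆ S) (v : V) : expWeight G t v ≤ expWeight G S v :=
  sum_le_sum_of_subset_of_nonneg h fun _ _ _ => by split <;> positivity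

lemma card_mul_add_card_mul_le_expWeight {S t₁ t₂ : Finset V} (hd : Disjoint t₁ t₂)
    (h₁S : t₁ ⊆ S) (h₂S : t₂ ⊆ S) {v : V} {n₁ n₂ : ℕ}
    (h₁ : ∀ s ∈ t₁, G.edist s v ≤ n₁) (h₂ : ∀ s ∈ t₂, G.edist s v ≤ n₂) :
    #t₁ * (2 * (2 : ℝ)⁻¹ ^ n₁) + #t₂ * (2 * (2 : ℝ)⁻¹ ^ n₂) ≤ expWeight G S v := by
  classical
  calc _ ≤ expWeight G t₁ v + expWeight G t₂ v :=
        add_le_add (card_mul_le_expWeight G h₁) (card_mul_le_expWeight G h₂)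
    _ = expWeight G (t₁ ∪ t₂) v := (sum_union hd).symm
    _ ≤ expWeight G S v := expWeight_mono G (union_subset h₁S h₂S) v

lemma inv_two_pow_mul_expWeight_le (S : Finset V) {c v : V} {d : ℕ} (h : G.edist c v ≤ d) :
    (2 : ℝ)⁻¹ ^ d * expWeight G S c ≤ expWeight G S v := by
  have hcv : G.Reachable c v :=
    SimpleGraph.edist_ne_top_iff_reachable.1 (ne_top_of_le_ne_top (ENat.natCast_ne_top d) h)
  rw [expWeight, expWeight, mul_sum]
  refine sum_le_sum fun s _ => ?_
  by_cases hsc : G.Reachable s c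
  · have hsv := hsc.trans hcv
    have hd : G.dist s v ≤ G.dist s c + d := by
      have := (G.edist_triangle (u := s) (v := c) (w := v)).trans (add_le_add_right h _)
      rw [← hsv.coe_dist_eq_edist, ← hsc.coe_dist_eq_edist] at this
      exact_mod_cast this
    rw [if_pos hsc, if_pos hsv, mul_left_comm, ← pow_add, add_comm d]
    exact mul_le_mul_of_nonneg_left
      (pow_le_pow_of_le_one (by norm_num) (by norm_num) hd) zero_le_two
  · rw [if_neg hsc, mul_zero]
    split <;> positivity

end ExpWeight

lemma Set.exists_mem_ne_ne_of_three_le_encard {α : Type*} {s : Set α} (hs : 3 ≤ s.encard)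
    (a b : α) : ∃ w ∈ s, w ≠ a ∧ w ≠ b := by
  by_contra! h
  have hsub : s ⊆ {a, b} := fun w hw => by
    by_cases hwa : w = a
    · exact Or.inl hwa
    · exact Or.inr (h w hw hwa)
  have := (Set.encard_le_encard hsub).trans (Set.encard_insert_le _ _)
  rw [Set.encard_singleton] at this
  have := hs.trans this
  norm_num at this

namespace ApollonianNetwork

variable {A : ApollonianNetwork}

lemma adj_ne {a b : A.Vert} (h : A.adj a b) : a ≠ b := by
  rintro rfl; exact A.adj_irrefl a h

lemma gen_lt_of_adj_of_le {a b : A.Vert} (hab : A.adj a b) (hle : A.gen b ≤ A.gen a)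
    (ha : 2 ≤ A.gen a) : A.gen b < A.gen a :=
  hle.lt_of_ne fun h => by have := A.adj_gen a b hab h.symm; omega

lemma encard_gen_eq_one : {v | A.gen v = 1}.encard = 3 := by
  obtain ⟨a, b, c, hab, hac, hbc, hU⟩ := A.U1_card
  exact Set.encard_eq_three.2 ⟨a, b, c, hab, hac, hbc, hU⟩

lemma exists_gen_eq_one_ne_ne (a b : A.Vert) : ∃ w, A.gen w = 1 ∧ w ≠ a ∧ w ≠ b :=
  Set.exists_mem_ne_ne_of_three_le_encard A.encard_gen_eq_one.ge a b

/-- For `2 ≤ gen v`, the three vertices `v` was attached to. -/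
def lowerNbrs (A : ApollonianNetwork) (v : A.Vert) : Set A.Vert :=
  {w | A.adj v w ∧ A.gen w < A.gen v}

lemma exists_lowerNbrs_eq {v : A.Vert} (hv : 2 ≤ A.gen v) :
    ∃ p q r, A.gen p + 1 = A.gen v ∧ A.adj p q ∧ A.adj p r ∧ A.adj q r ∧
      A.lowerNbrs v = {p, q, r} := by
  obtain ⟨p, q, r, hp, -, -, hpq, hpr, hqr, hdn⟩ := A.created v hv
  exact ⟨p, q, r, by omega, hpq, hpr, hqr, hdn⟩

lemma encard_lowerNbrs {v : A.Vert} (hv : 2 ≤ A.gen v) : (A.lowerNbrs v).encard = 3 := by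
  obtain ⟨p, q, r, -, hpq, hpr, hqr, hdn⟩ := A.exists_lowerNbrs_eq hv
  exact Set.encard_eq_three.2 ⟨p, q, r, adj_ne hpq, adj_ne hpr, adj_ne hqr, hdn⟩

lemma exists_mem_lowerNbrs_ne_ne {v : A.Vert} (hv : 2 ≤ A.gen v) (a b : A.Vert) :
    ∃ w ∈ A.lowerNbrs v, w ≠ a ∧ w ≠ b :=
  Set.exists_mem_ne_ne_of_three_le_encard (A.encard_lowerNbrs hv).ge a b

lemma exists_lowerNbrs_eq_parent {v : A.Vert} (hv : 3 ≤ A.gen v) :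
    ∃ p q r, A.gen p + 1 = A.gen v ∧ q ∈ A.lowerNbrs p ∧ r ∈ A.lowerNbrs p ∧ A.adj q r ∧
      A.lowerNbrs v = {p, q, r} := by
  obtain ⟨p, q, r, hp, hpq, hpr, hqr, hdn⟩ := A.exists_lowerNbrs_eq (by omega : 2 ≤ A.gen v)
  have hq : q ∈ A.lowerNbrs v := hdn ▸ by simp
  have hr : r ∈ A.lowerNbrs v := hdn ▸ by simp
  exact ⟨p, q, r, hp, ⟨hpq, A.gen_lt_of_adj_of_le hpq (by have := hq.2; omega) (by omega)⟩,
    ⟨hpr, A.gen_lt_of_adj_of_le hpr (by have := hr.2; omega) (by omega)⟩, hqr, hdn⟩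

lemma exists_adj_gen_add_three_le {v : A.Vert} (hv : 4 ≤ A.gen v) :
    ∃ b, A.adj v b ∧ A.gen b + 3 ≤ A.gen v := by
  obtain ⟨p, q, r, hp, ⟨-, hq⟩, ⟨-, hr⟩, hqr, hdn⟩ :=
    A.exists_lowerNbrs_eq_parent (v := v) (by omega)
  have hvq : q ∈ A.lowerNbrs v := hdn ▸ by simp
  have hvr : r ∈ A.lowerNbrs v := hdn ▸ by simp
  by_cases hq3 : A.gen q + 3 ≤ A.gen v
  · exact ⟨q, hvq.1, hq3⟩
  · refine ⟨r, hvr.1, ?_⟩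
    -- `q` and `r` are adjacent, so they cannot both have generation `gen v - 2 ≥ 2`
    by_contra hr3
    have := A.adj_gen q r hqr (by omega)
    omega

lemma exists_adj_adj_gen_le (c : A.Vert) :
    ∃ p q, p ≠ q ∧ A.adj c p ∧ A.adj c q ∧ A.gen p ≤ A.gen c ∧ A.gen q ≤ A.gen c := by
  by_cases hc : 2 ≤ A.gen c
  · obtain ⟨p, q, r, -, hpq, -, -, hdn⟩ := A.exists_lowerNbrs_eq hc
    have hp : p ∈ A.lowerNbrs c := hdn ▸ by simp
    have hq : q ∈ A.lowerNbrs c := hdn ▸ by simp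
    exact ⟨p, q, adj_ne hpq, hp.1, hq.1, hp.2.le, hq.2.le⟩
  · have hc1 : A.gen c = 1 := by have := A.gen_pos c; omega
    obtain ⟨p, hp, hpc, -⟩ := A.exists_gen_eq_one_ne_ne c c
    obtain ⟨q, hq, hqc, hqp⟩ := A.exists_gen_eq_one_ne_ne c p
    exact ⟨p, q, hqp.symm, A.U1_complete c p hc1 hp hpc.symm, A.U1_complete c q hc1 hq hqc.symm,
      by omega, by omega⟩

lemma exists_two_near_of_mem_lowerNbrs {u x y : A.Vert} (hu : 3 ≤ A.gen u)
    (hx : x ∈ A.lowerNbrs u) (hy : y ∈ A.lowerNbrs u) (hxy : A.adj x y) :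
    ∃ z ∈ A.lowerNbrs u, ∃ w, A.gen w < A.gen u ∧ (A.adj x w ∨ A.adj y w) ∧
      z ≠ x ∧ z ≠ y ∧ z ≠ w ∧ w ≠ x ∧ w ≠ y := by
  wlog hx2 : 2 ≤ A.gen x generalizing x y
  · by_cases hy2 : 2 ≤ A.gen y
    · obtain ⟨z, hz, w, hw, hadj, hzy, hzx, hzw, hwy, hwx⟩ :=
        this hy hx (A.adj_symm x y hxy) hy2
      exact ⟨z, hz, w, hw, hadj.symm, hzx, hzy, hzw, hwx, hwy⟩
    have hx1 : A.gen x = 1 := by have := A.gen_pos x; omega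
    have hy1 : A.gen y = 1 := by have := A.gen_pos y; omega
    obtain ⟨z, _, _, hz, -, -, -, hdn⟩ := A.exists_lowerNbrs_eq (by omega : 2 ≤ A.gen u)
    obtain ⟨w, hw, hwx, hwy⟩ := A.exists_gen_eq_one_ne_ne x y
    have hne {a b : A.Vert} (h : A.gen a ≠ A.gen b) : a ≠ b := ne_of_apply_ne A.gen h
    -- the parent `z` of `u` has generation at least 2, unlike `x`, `y` and `w`
    exact ⟨z, hdn ▸ by simp, w, by omega, Or.inl (A.U1_complete x w hx1 hw hwx.symm),
      hne (by omega), hne (by omega), hne (by omega), hwx, hwy⟩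
  obtain ⟨z, hz, hzx, hzy⟩ := A.exists_mem_lowerNbrs_ne_ne (v := u) (by omega) x y
  obtain ⟨w, hw, hwy, hwz⟩ := A.exists_mem_lowerNbrs_ne_ne hx2 y z
  exact ⟨z, hz, w, hw.2.trans hx.2, Or.inl hw.1, hzx, hzy, hwz.symm, (adj_ne hw.1).symm, hwy⟩

lemma exists_lowerNbrs_and_second_nbrs {c : A.Vert} (hc : 4 ≤ A.gen c) :
    ∃ t₁ t₂ : Finset A.Vert, #t₁ = 3 ∧ #t₂ = 2 ∧ Disjoint t₁ t₂ ∧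
      (∀ a ∈ t₁, a ∈ A.lowerNbrs c) ∧ ∀ a ∈ t₂, A.gen a < A.gen c ∧ ∃ b ∈ t₁, A.adj b a := by
  classical
  obtain ⟨u, x, y, hu, hx, hy, hxy, hdn⟩ := A.exists_lowerNbrs_eq_parent (v := c) (by omega)
  obtain ⟨z, hz, w, hw, hxyw, hzx, hzy, hzw, hwx, hwy⟩ :=
    A.exists_two_near_of_mem_lowerNbrs (by omega) hx hy hxy
  have hne {a b : A.Vert} (h : A.gen a < A.gen b) : a ≠ b := ne_of_apply_ne A.gen h.ne
  have hxu := hne hx.2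
  have hyu := hne hy.2
  have hzu := hne hz.2
  have hwu := hne hw
  refine ⟨{u, x, y}, {z, w}, card_eq_three.2 ⟨u, x, y, hxu.symm, hyu.symm, adj_ne hxy, rfl⟩,
    card_pair hzw, ?_, fun a ha => hdn ▸ by simpa using ha, ?_⟩
  · simp only [disjoint_insert_right, disjoint_singleton_right, mem_insert, mem_singleton]
    tauto
  · simp only [mem_insert, mem_singleton, forall_eq_or_imp, forall_eq, exists_eq_or_imp,
      exists_eq_left]
    exact ⟨⟨by have := hz.2; omega, Or.inl hz.1⟩, by omega, Or.inr hxyw⟩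

section Subgraph

variable {k : ℕ}

lemma edist_le_one_of_adj {a b : {v // A.gen v ≤ k}} (h : A.adj a b) : (A.G k).edist a b ≤ 1 :=
  (SimpleGraph.edist_eq_one_iff_adj.2 h).le

lemma exists_gen_le_edist_le {m : ℕ} (hm : 3 ≤ m) (n : ℕ) (v : {v // A.gen v ≤ k})
    (hv : A.gen v ≤ m + 1 + 3 * n) :
    ∃ c : {v // A.gen v ≤ k}, A.gen c ≤ m + 1 ∧ (A.G k).edist v c ≤ n := by
  induction n generalizing v with
  | zero => exact ⟨v, by omega, by simp⟩
  | succ n ih =>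
    by_cases hv' : A.gen v ≤ m + 1
    · exact ⟨v, hv', by simp⟩
    obtain ⟨b, hvb, hb⟩ := A.exists_adj_gen_add_three_le (v := v) (by omega)
    let b' : {v // A.gen v ≤ k} := ⟨b, by have := v.2; omega⟩
    obtain ⟨c, hc, hbc⟩ := ih b' (by simp only [b']; omega)
    refine ⟨c, hc, (SimpleGraph.edist_triangle (v := b')).trans ?_⟩
    calc _ ≤ 1 + (n : ℕ∞) := add_le_add (edist_le_one_of_adj hvb) hbc
      _ = (n + 1 : ℕ) := by push_cast; ring

lemma four_le_expWeight {m : ℕ} (hm : 3 ≤ m) {S : Finset {v // A.gen v ≤ k}}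
    (hS : ∀ s, s ∈ S ↔ A.gen s ≤ m) (c : {v // A.gen v ≤ k}) (hc : A.gen c ≤ m + 1) :
    4 ≤ expWeight (A.G k) S c := by
  classical
  by_cases hcm : A.gen c ≤ m
  · obtain ⟨p, q, hpq, hcp, hcq, hp, hq⟩ := A.exists_adj_adj_gen_le c
    have hck := c.2
    let p' : {v // A.gen v ≤ k} := ⟨p, by omega⟩
    let q' : {v // A.gen v ≤ k} := ⟨q, by omega⟩
    calc (4 : ℝ) = #{c} * (2 * 2⁻¹ ^ 0) + #{p', q'} * (2 * 2⁻¹ ^ 1) := by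
          rw [card_singleton, card_pair fun h => hpq (congrArg Subtype.val h)]; norm_num
      _ ≤ expWeight (A.G k) S c := by
        refine card_mul_add_card_mul_le_expWeight _ ?_ ?_ ?_ ?_ ?_
        · simp only [disjoint_singleton_left, mem_insert, mem_singleton, not_or]
          exact ⟨fun h => adj_ne hcp (congrArg Subtype.val h),
            fun h => adj_ne hcq (congrArg Subtype.val h)⟩
        · simpa [hS] using hcm
        · simp only [insert_subset_iff, singleton_subset_iff, hS]
          exact ⟨by simp only [p']; omega, by simp only [q']; omega⟩
        · simp
        · simp only [mem_insert, mem_singleton, forall_eq_or_imp, forall_eq]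
          exact ⟨edist_le_one_of_adj (A.adj_symm _ _ hcp),
            edist_le_one_of_adj (A.adj_symm _ _ hcq)⟩
  · obtain ⟨t₁, t₂, h₁, h₂, hd, ht₁, ht₂⟩ := A.exists_lowerNbrs_and_second_nbrs (c := c) (by omega)
    have hk {a : A.Vert} (ha : A.gen a < A.gen c) : A.gen a ≤ k := by have := c.2; omega
    have hcard {t : Finset A.Vert} (ht : ∀ a ∈ t, A.gen a < A.gen c) :
        #(t.subtype (A.gen · ≤ k)) = #t := by
      rw [card_subtype, filter_true_of_mem fun a ha => hk (ht a ha)]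
    have hsub {t : Finset A.Vert} (ht : ∀ a ∈ t, A.gen a < A.gen c) :
        t.subtype (A.gen · ≤ k) ⊆ S := fun s hs => (hS s).2 <| by
      have := ht s (mem_subtype.1 hs); omega
    have hlow₁ : ∀ a ∈ t₁, A.gen a < A.gen c := fun a ha => (ht₁ a ha).2
    have hlow₂ : ∀ a ∈ t₂, A.gen a < A.gen c := fun a ha => (ht₂ a ha).1
    calc (4 : ℝ) = #(t₁.subtype (A.gen · ≤ k)) * (2 * 2⁻¹ ^ 1) +
          #(t₂.subtype (A.gen · ≤ k)) * (2 * 2⁻¹ ^ 2) := by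
          rw [hcard hlow₁, hcard hlow₂, h₁, h₂]; norm_num
      _ ≤ expWeight (A.G k) S c := by
        refine card_mul_add_card_mul_le_expWeight _ ?_ (hsub hlow₁) (hsub hlow₂) ?_ ?_
        · exact disjoint_left.2 fun s hs₁ hs₂ =>
            disjoint_left.1 hd (mem_subtype.1 hs₁) (mem_subtype.1 hs₂)
        · exact fun s hs => edist_le_one_of_adj (A.adj_symm _ _ (ht₁ s (mem_subtype.1 hs)).1)
        · intro s hs
          obtain ⟨-, b, hb, hbs⟩ := ht₂ s (mem_subtype.1 hs)
          let b' : {v // A.gen v ≤ k} := ⟨b, hk (hlow₁ b hb)⟩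
          calc (A.G k).edist s c ≤ (A.G k).edist s b' + (A.G k).edist b' c :=
                SimpleGraph.edist_triangle
            _ ≤ 1 + 1 := add_le_add (edist_le_one_of_adj (A.adj_symm _ _ hbs))
                (edist_le_one_of_adj (A.adj_symm _ _ (ht₁ b hb).1))
            _ = (2 : ℕ) := by norm_num

lemma isPorousExpDomSet_of_gen_le {m : ℕ} (hm : 3 ≤ m) (hk : k ≤ m + 7)
    {S : Finset {v // A.gen v ≤ k}} (hS : ∀ s, s ∈ S ↔ A.gen s ≤ m) :
    IsPorousExpDomSet (A.G k) S := by
  intro v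
  obtain ⟨c, hc, hvc⟩ := A.exists_gen_le_edist_le hm 2 v (by have := v.2; omega)
  calc (1 : ℝ) = 2⁻¹ ^ 2 * 4 := by norm_num
    _ ≤ 2⁻¹ ^ 2 * expWeight (A.G k) S c := by gcongr; exact four_le_expWeight hm hS c hc
    _ ≤ expWeight (A.G k) S v :=
      inv_two_pow_mul_expWeight_le (A.G k) S (SimpleGraph.edist_comm ▸ hvc)

end Subgraph

lemma eq_of_lowerNbrs_eq {v v' : A.Vert} (hv : 2 ≤ A.gen v) (hgen : A.gen v = A.gen v')
    (h : A.lowerNbrs v = A.lowerNbrs v') : v = v' := by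
  obtain ⟨u, x, y, hu, hx, hy, hux, huy, hxy, hdn⟩ := A.created v hv
  have key {w : A.Vert} (hw : A.gen w = A.gen v) (hdnw : A.lowerNbrs w = A.lowerNbrs v) :
      A.gen w = A.gen v - 1 + 1 ∧ {t | A.adj w t ∧ A.gen t ≤ A.gen v - 1} = {u, x, y} := by
    refine ⟨by omega, Eq.trans ?_ (hdnw.trans hdn)⟩
    ext t
    exact and_congr_right fun _ => by omega
  exact (A.attach _ (by omega) u x y hu hx hy (adj_ne hxy) hux huy hxy).unique
    (key rfl rfl) (key hgen.symm h.symm)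

lemma encard_children_le {u : A.Vert} (hu : 2 ≤ A.gen u) :
    {v | A.gen v = A.gen u + 1 ∧ A.adj v u}.encard ≤ 3 := by
  classical
  obtain ⟨a, b, c, -, -, -, -, hdnu⟩ := A.exists_lowerNbrs_eq hu
  have hmaps : Set.MapsTo A.lowerNbrs {v | A.gen v = A.gen u + 1 ∧ A.adj v u}
      {{u, a, b}, {u, a, c}, {u, b, c}} := by
    rintro v ⟨hv, hvu⟩
    obtain ⟨p, q, r, hp, hq, hr, hqr, hdnv⟩ := A.exists_lowerNbrs_eq_parent (v := v) (by omega)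
    have hup : u = p := by
      have hu' : u ∈ A.lowerNbrs v := ⟨hvu, by omega⟩
      rw [hdnv] at hu'
      rcases hu' with rfl | rfl | rfl
      · rfl
      · have := hq.2; omega
      · have := hr.2; omega
    subst hup
    rw [hdnu] at hq hr
    rw [hdnv]
    have hqr' := adj_ne hqr
    rcases hq with rfl | rfl | rfl <;> rcases hr with rfl | rfl | rfl <;>
      simp_all [Set.insert_comm, Set.pair_comm]
  calc _ ≤ ({{u, a, b}, {u, a, c}, {u, b, c}} : Set (Set A.Vert)).encard :=
        Set.encard_le_encard_of_injOn hmaps fun v hv v' hv' =>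
          A.eq_of_lowerNbrs_eq (by rw [hv.1]; omega) (hv.1.trans hv'.1.symm)
    _ ≤ ({{u, a, c}, {u, b, c}} : Set (Set A.Vert)).encard + 1 := Set.encard_insert_le _ _
    _ ≤ ({{u, b, c}} : Set (Set A.Vert)).encard + 1 + 1 := by
      gcongr; exact Set.encard_insert_le _ _
    _ = 3 := by rw [Set.encard_singleton]; rfl

lemma encard_gen_eq_two_le : {v | A.gen v = 2}.encard ≤ 1 := by
  have hdn {v : A.Vert} (hv : A.gen v = 2) : A.lowerNbrs v = {w | A.gen w = 1} := by
    refine (Set.finite_of_encard_eq_coe (A.encard_lowerNbrs hv.ge)).eq_of_subset_of_encard_le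
      (fun w hw => ?_) (by rw [A.encard_gen_eq_one, A.encard_lowerNbrs hv.ge])
    have := hw.2
    have := A.gen_pos w
    simp only [Set.mem_ofPred_eq]
    omega
  exact Set.encard_le_one_iff.2 fun a b ha hb =>
    A.eq_of_lowerNbrs_eq ha.ge (ha.trans hb.symm) ((hdn ha).trans (hdn hb).symm)

lemma encard_gen_eq_le {j : ℕ} (hj : 2 ≤ j) : {v | A.gen v = j}.encard ≤ 3 ^ (j - 2) := by
  induction j, hj using Nat.le_induction with
  | base => simpa using A.encard_gen_eq_two_le
  | succ j hj ih =>
    have hfin : {v | A.gen v = j}.Finite :=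
      Set.finite_of_encard_le_coe (k := 3 ^ (j - 2)) (by exact_mod_cast ih)
    have hsub : {v | A.gen v = j + 1} ⊆
        ⋃ u ∈ hfin.toFinset, {v | A.gen v = A.gen u + 1 ∧ A.adj v u} := by
      intro v hv
      obtain ⟨p, q, r, hp, -, -, -, hdn⟩ := A.exists_lowerNbrs_eq (v := v) (by rw [hv]; omega)
      have hvp : p ∈ A.lowerNbrs v := hdn ▸ by simp
      simp only [Set.mem_iUnion, Set.Finite.mem_toFinset, Set.mem_ofPred_eq]
      exact ⟨p, by rw [hv] at hp; omega, hp.symm, hvp.1⟩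
    calc _ ≤ (⋃ u ∈ hfin.toFinset, {v | A.gen v = A.gen u + 1 ∧ A.adj v u}).encard :=
          Set.encard_le_encard hsub
      _ ≤ ∑ u ∈ hfin.toFinset, {v | A.gen v = A.gen u + 1 ∧ A.adj v u}.encard :=
          Finset.set_encard_biUnion_le _ _
      _ ≤ ∑ _u ∈ hfin.toFinset, 3 := sum_le_sum fun u hu =>
          A.encard_children_le (by rw [hfin.mem_toFinset.1 hu]; exact hj)
      _ = {v | A.gen v = j}.encard * 3 := by
          rw [sum_const, nsmul_eq_mul, hfin.encard_eq_coe_toFinset_card]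
      _ ≤ 3 ^ (j - 2) * 3 := by gcongr
      _ = 3 ^ (j + 1 - 2) := by rw [← pow_succ]; congr 1; omega

lemma two_mul_encard_gen_le_le {m : ℕ} (hm : 1 ≤ m) :
    2 * {v | A.gen v ≤ m}.encard ≤ 3 ^ (m - 1) + 5 := by
  induction m, hm using Nat.le_induction with
  | base =>
    have h1 : {v | A.gen v ≤ 1} = {v | A.gen v = 1} := by
      ext v; have := A.gen_pos v; simp only [Set.mem_ofPred_eq]; omega
    rw [h1, A.encard_gen_eq_one]
    norm_num
  | succ m hm ih =>
    have hsplit : {v | A.gen v ≤ m + 1} = {v | A.gen v ≤ m} ∪ {v | A.gen v = m + 1} := by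
      ext v; simp only [Set.mem_ofPred_eq, Set.mem_union]; omega
    obtain ⟨n, rfl⟩ : ∃ n, m = n + 1 := ⟨m - 1, by omega⟩
    calc _ ≤ 2 * ({v | A.gen v ≤ n + 1}.encard + {v | A.gen v = n + 1 + 1}.encard) := by
          rw [hsplit]; gcongr; exact Set.encard_union_le _ _
      _ ≤ (3 ^ n + 5) + 2 * 3 ^ n := by
          rw [mul_add]
          exact add_le_add ih (by gcongr; exact A.encard_gen_eq_le (j := n + 2) (by omega))
      _ = 3 ^ (n + 1 + 1 - 1) + 5 := by simp only [Nat.add_sub_cancel]; ring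

end ApollonianNetwork

theorem stmt1 (A : ApollonianNetwork) (k : ℕ) (hk : 10 ≤ k) :
    2 * porousExpDomNum (A.G k) ≤ (3 ^ (k - 8) + 5 : ℕ∞) := by
  have hle := A.two_mul_encard_gen_le_le (m := k - 7) (by omega)
  have hfin₀ : {v | A.gen v ≤ k - 7}.Finite := Set.encard_ne_top_iff.1 fun h => by simp [h] at hle
  have hfin : {s : {v // A.gen v ≤ k} | A.gen s ≤ k - 7}.Finite :=
    hfin₀.preimage Subtype.val_injective.injOn
  have hdom := A.isPorousExpDomSet_of_gen_le (by omega) (by omega) fun s => hfin.mem_toFinset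
  calc 2 * porousExpDomNum (A.G k) ≤ 2 * (#hfin.toFinset : ℕ∞) := by
        gcongr; exact sInf_le ⟨_, hdom, rfl⟩
    _ ≤ 2 * {v | A.gen v ≤ k - 7}.encard := by
        rw [← hfin.encard_eq_coe_toFinset_card]
        gcongr
        exact Set.encard_le_encard_of_injOn (fun s hs => hs) Subtype.val_injective.injOn
    _ ≤ 3 ^ (k - 8) + 5 := by rwa [show k - 7 - 1 = k - 8 by omega] at hle
end

section
/- For every k ≥ 4, every vertex of the k-th generation U_k has at least one neighbor in V(G_{k-3}) (i.e., a neighbor belonging to a generation U_j with j ≤ k-3) in the Apollonian network G_k. -/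
/-!
Each vertex `v` of generation `k` sees, among earlier generations, a triangle `u, x, y` of
generation at most `k - 1`. Outside generation 1 adjacent vertices have distinct generations,
so the three corners of that triangle cannot all lie in the two generations `k - 2` and
`k - 1` (both at least 2 when `k ≥ 4`): one of them has generation at most `k - 3`.
-/

namespace ApollonianNetwork

variable (A : ApollonianNetwork)

theorem gen_ne_of_adj {a b : A.Vert} (hab : A.adj a b) (ha : 2 ≤ A.gen a) :
    A.gen a ≠ A.gen b := fun h => by
  have := A.adj_gen a b hab h
  omega

theorem exists_gen_le_sub_two_of_triangle {m : ℕ} (hm : 3 ≤ m) {u x y : A.Vert}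
    (hux : A.adj u x) (huy : A.adj u y) (hxy : A.adj x y)
    (hu : A.gen u ≤ m) (hx : A.gen x ≤ m) (hy : A.gen y ≤ m) :
    ∃ w ∈ ({u, x, y} : Set A.Vert), A.gen w ≤ m - 2 := by
  by_contra! h
  have hu' := h u (by simp)
  have hx' := h x (by simp)
  have hy' := h y (by simp)
  have := A.gen_ne_of_adj hux (by omega)
  have := A.gen_ne_of_adj huy (by omega)
  have := A.gen_ne_of_adj hxy (by omega)
  omega

end ApollonianNetwork

theorem stmt7 (A : ApollonianNetwork) (k : ℕ) (hk : 4 ≤ k) :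
    ∀ v : A.Vert, A.gen v = k → ∃ u : A.Vert, A.adj v u ∧ A.gen u ≤ k - 3 := by
  intro v hv
  obtain ⟨u, x, y, hu, hx, hy, hux, huy, hxy, hnbrs⟩ := A.created v (by omega)
  obtain ⟨w, hw, hgen⟩ := A.exists_gen_le_sub_two_of_triangle (m := k - 1) (by omega)
    hux huy hxy (by omega) (by omega) (by omega)
  rw [← hnbrs] at hw
  exact ⟨w, hw.1, by omega⟩
end
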